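/- Let d ≥ 7 be an integer. Then C^d_{d−3,1} < N_{d−3,d}, i.e., C^d_{d−3,1} is strictly smaller than min{ C^d_{d−3,i} : ⌈(d−1)/2⌉ ≤ i ≤ d−2 }. -/
import Mathlib


/-- `coefC d r i` is the coefficient of `z^r` in the degree-`d` polynomial
`c_i(z) = (z+i)(z+i-1)⋯(z+i-(d-1))`. -/
noncomputable def coefC (d r : ℕ) (i : ℤ) : ℤ :=
  (∏ j ∈ Finset.range d, (Polynomial.X + Polynomial.C (i - (j : ℤ)))).coeff r

/-- Stirling numbers of the first kind: `stirl n k` is the coefficient of `z^k` in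
`∏_{j=0}^{n-1} (z - j)`. -/
noncomputable def stirl (n k : ℕ) : ℤ :=
  (∏ j ∈ Finset.range n, (Polynomial.X - Polynomial.C (j : ℤ))).coeff k

/-- `Mrd d r = min { C^d_{r,i} : 1 ≤ i ≤ d-2 }`. -/
noncomputable def Mrd (d r : ℕ) : ℤ :=
  sInf {x : ℤ | ∃ i : ℕ, 1 ≤ i ∧ i ≤ d - 2 ∧ x = coefC d r (i : ℤ)}

/-- `Nrd d r = min { C^d_{r,i} : ⌈(d-1)/2⌉ ≤ i ≤ d-2 }`; note `⌈(d-1)/2⌉ = (d-1+1)/2`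
in natural-number arithmetic. -/
noncomputable def Nrd (d r : ℕ) : ℤ :=
  sInf {x : ℤ | ∃ i : ℕ, (d - 1 + 1) / 2 ≤ i ∧ i ≤ d - 2 ∧ x = coefC d r (i : ℤ)}

open Polynomial in
private noncomputable def pp (i : ℤ) (d : ℕ) : Polynomial ℤ :=
  ∏ j ∈ Finset.range d, (X + C (i - (j : ℤ)))

private lemma coefC_eq_pp (d r : ℕ) (i : ℤ) : coefC d r i = (pp i d).coeff r := rfl

open Polynomial

private lemma pp_succ (i : ℤ) (d : ℕ) :
    pp i (d + 1) = pp i d * (X + C (i - (d : ℤ))) := by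
  simp [pp, Finset.prod_range_succ]

private lemma pp_natDegree (i : ℤ) (d : ℕ) : (pp i d).natDegree = d := by
  rw [pp, Polynomial.natDegree_prod_of_monic]
  · simp only [natDegree_X_add_C, Finset.sum_const, smul_eq_mul, mul_one, Finset.card_range]
  · intro j _; exact monic_X_add_C _

private lemma pp_monic (i : ℤ) (d : ℕ) : (pp i d).Monic :=
  monic_prod_of_monic _ _ (fun j _ => monic_X_add_C _)

private lemma pp_lead (i : ℤ) (d : ℕ) : (pp i d).coeff d = 1 := by
  have h := (pp_monic i d).coeff_natDegree
  rwa [pp_natDegree] at h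

private lemma coeff_mul_XC (q : Polynomial ℤ) (c : ℤ) (k : ℕ) :
    (q * (X + C c)).coeff (k + 1) = q.coeff k + c * q.coeff (k + 1) := by
  rw [mul_add, coeff_add, coeff_mul_X, coeff_mul_C, mul_comm]

private lemma L1 : ∀ (d : ℕ) (i : ℤ),
    2 * (pp i (d + 1)).coeff d = 2 * ((d : ℤ) + 1) * i + ((d : ℤ) + 1) - ((d : ℤ) + 1) ^ 2 := by
  intro d
  induction d with
  | zero =>
    intro i
    simp [pp, Finset.prod_range_one]
  | succ d ih =>
    intro i
    rw [pp_succ, coeff_mul_XC, pp_lead]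
    push_cast
    have h := ih i
    push_cast at h
    linarith [h]

private lemma L2 : ∀ (d : ℕ) (i : ℤ),
    24 * (pp i (d + 2)).coeff d =
      3 * ((d : ℤ) + 2) ^ 4 - 10 * ((d : ℤ) + 2) ^ 3 + 9 * ((d : ℤ) + 2) ^ 2 - 2 * ((d : ℤ) + 2)
        + (-12 * ((d : ℤ) + 2) ^ 3 + 24 * ((d : ℤ) + 2) ^ 2 - 12 * ((d : ℤ) + 2)) * i
        + (12 * ((d : ℤ) + 2) ^ 2 - 12 * ((d : ℤ) + 2)) * i ^ 2 := by
  intro d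
  induction d with
  | zero =>
    intro i
    have : pp i 2 = (X + C (i - 0)) * (X + C (i - 1)) := by
      simp [pp, Finset.prod_range_succ, Finset.prod_range_one]
    rw [this]
    simp [mul_coeff_zero]
    ring
  | succ d ih =>
    intro i
    have hrec : pp i (d + 3) = pp i (d + 2) * (X + C (i - ((d : ℤ) + 2))) := by
      have := pp_succ i (d + 2)
      push_cast at this ⊢
      convert this using 4
    rw [hrec, coeff_mul_XC]
    have h1 := L1 (d + 1) i
    have h2 := ih i
    have e1 : (pp i (d + 2)).coeff (d + 1) = (pp i (d + 1 + 1)).coeff (d + 1) := by norm_num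
    rw [e1] at *
    push_cast at h1 h2 ⊢
    linear_combination h2 + 12 * (i - ((d : ℤ) + 2)) * h1

private lemma L3 : ∀ (d : ℕ) (i : ℤ),
    48 * (pp i (d + 3)).coeff d =
      16 * ((d : ℤ) + 3) * i ^ 3 + 24 * ((d : ℤ) + 3) * i ^ 2 + 8 * ((d : ℤ) + 3) * i
      - 24 * ((d : ℤ) + 3) ^ 2 * i ^ 3 - 60 * ((d : ℤ) + 3) ^ 2 * i ^ 2
      - 40 * ((d : ℤ) + 3) ^ 2 * i - 6 * ((d : ℤ) + 3) ^ 2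
      + 8 * ((d : ℤ) + 3) ^ 3 * i ^ 3 + 48 * ((d : ℤ) + 3) ^ 3 * i ^ 2
      + 58 * ((d : ℤ) + 3) ^ 3 * i + 17 * ((d : ℤ) + 3) ^ 3
      - 12 * ((d : ℤ) + 3) ^ 4 * i ^ 2 - 32 * ((d : ℤ) + 3) ^ 4 * i - 17 * ((d : ℤ) + 3) ^ 4
      + 6 * ((d : ℤ) + 3) ^ 5 * i + 7 * ((d : ℤ) + 3) ^ 5 - ((d : ℤ) + 3) ^ 6 := by
  intro d
  induction d with
  | zero =>
    intro i
    have : pp i 3 = (X + C (i - 0)) * (X + C (i - 1)) * (X + C (i - 2)) := by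
      simp [pp, Finset.prod_range_succ, Finset.prod_range_one]
    rw [this]
    simp [mul_coeff_zero]
    ring
  | succ d ih =>
    intro i
    have hrec : pp i (d + 4) = pp i (d + 3) * (X + C (i - ((d : ℤ) + 3))) := by
      have := pp_succ i (d + 3)
      push_cast at this ⊢
      convert this using 4
    rw [hrec, coeff_mul_XC]
    have h2 := L2 (d + 1) i
    have h3 := ih i
    have e1 : (pp i (d + 3)).coeff (d + 1) = (pp i (d + 1 + 2)).coeff (d + 1) := by norm_num
    rw [e1] at *
    push_cast at h2 h3 ⊢
    linear_combination h3 + 2 * (i - ((d : ℤ) + 3)) * h2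

private lemma coefC_formula (d : ℕ) (hd : 7 ≤ d) (i : ℤ) :
    48 * coefC d (d - 3) i =
      16 * (d : ℤ) * i ^ 3 + 24 * (d : ℤ) * i ^ 2 + 8 * (d : ℤ) * i
      - 24 * (d : ℤ) ^ 2 * i ^ 3 - 60 * (d : ℤ) ^ 2 * i ^ 2
      - 40 * (d : ℤ) ^ 2 * i - 6 * (d : ℤ) ^ 2
      + 8 * (d : ℤ) ^ 3 * i ^ 3 + 48 * (d : ℤ) ^ 3 * i ^ 2
      + 58 * (d : ℤ) ^ 3 * i + 17 * (d : ℤ) ^ 3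
      - 12 * (d : ℤ) ^ 4 * i ^ 2 - 32 * (d : ℤ) ^ 4 * i - 17 * (d : ℤ) ^ 4
      + 6 * (d : ℤ) ^ 5 * i + 7 * (d : ℤ) ^ 5 - (d : ℤ) ^ 6 := by
  obtain ⟨m, rfl⟩ : ∃ m, d = m + 3 := ⟨d - 3, by omega⟩
  have hm : m + 3 - 3 = m := by omega
  rw [coefC_eq_pp, hm, L3 m i]
  push_cast
  ring

private lemma key_lt (d : ℕ) (hd : 7 ≤ d) (i : ℕ) (h1 : (d - 1 + 1) / 2 ≤ i)
    (h2 : i ≤ d - 2) : coefC d (d - 3) ((1 : ℕ) : ℤ) < coefC d (d - 3) (i : ℤ) := by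
  set D : ℤ := (d : ℤ) with hD
  set I : ℤ := (i : ℤ) with hI
  have hd7 : (7 : ℤ) ≤ D := by rw [hD]; exact_mod_cast hd
  have hi1 : D - 1 ≤ 2 * I := by
    have : d - 1 ≤ 2 * i := by omega
    omega
  have hi2 : I ≤ D - 2 := by
    have : i ≤ d - 2 := h2
    omega
  have hi3 : (3 : ℤ) ≤ I := by
    have : 3 ≤ i := by omega
    omega
  have ha := coefC_formula d hd ((1 : ℕ) : ℤ)
  have hb := coefC_formula d hd (i : ℤ)
  have hg : 0 < 4 * I ^ 2 + (10 - 6 * D) * I + 3 * D ^ 2 - 13 * D + 12 := by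
    nlinarith [sq_nonneg (8 * I + 10 - 6 * D)]
  have hfac : 0 < 2 * D * (D - 1) * (D - 2) * (I - 1) := by
    have : (0:ℤ) < D := by linarith
    have : (0:ℤ) < D - 1 := by linarith
    have : (0:ℤ) < D - 2 := by linarith
    have : (0:ℤ) < I - 1 := by linarith
    positivity
  have hkey : 48 * coefC d (d - 3) (i : ℤ) - 48 * coefC d (d - 3) ((1 : ℕ) : ℤ) =
      2 * D * (D - 1) * (D - 2) * (I - 1) *
        (4 * I ^ 2 + (10 - 6 * D) * I + 3 * D ^ 2 - 13 * D + 12) := by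
    rw [ha, hb]
    push_cast
    ring
  nlinarith [mul_pos hfac hg, hkey]

theorem stmt_15 (d : ℕ) (hd : 7 ≤ d) : coefC d (d - 3) ((1 : ℕ) : ℤ) < Nrd d (d - 3) := by
  set S : Set ℤ := {x : ℤ | ∃ i : ℕ, (d - 1 + 1) / 2 ≤ i ∧ i ≤ d - 2 ∧ x = coefC d (d - 3) (i : ℤ)}
    with hS
  have hne : S.Nonempty := ⟨coefC d (d - 3) ((d - 2 : ℕ) : ℤ), ⟨d - 2, by omega, le_refl _, rfl⟩⟩
  have hbdd : BddBelow S := by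
    refine ⟨coefC d (d - 3) ((1 : ℕ) : ℤ), ?_⟩
    rintro x ⟨i, hi1, hi2, rfl⟩
    exact le_of_lt (key_lt d hd i hi1 hi2)
  have hmem : sInf S ∈ S := Int.csInf_mem hne hbdd
  obtain ⟨i, hi1, hi2, hx⟩ := hmem
  have : Nrd d (d - 3) = sInf S := rfl
  rw [this, hx]
  exact key_lt d hd i hi1 hi2
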